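/- arXiv:2511.22027 — 2 statements merged into one kernel-verified Lean document; each statement's English description precedes it below -/
import Mathlib

section
/- When there are exactly three agents (n = 3), on any preference domain satisfying Top-one Richness, a mechanism is locally unanimous and strategy-proof if and only if it equals the TTC mechanism. -/
/- Housing market model (Shapley–Scarf). Agents and objects are identified:
the type `I` is the (finite) set of agents, and object `i` (the endowment of
agent `i`) is identified with `i` itself. A strict preference is a linear
order on `I` (viewed as the set of objects); a preference domain is a set of
linear orders; a mechanism maps preference profiles to assignments `I → I`
(an allocation being a bijective assignment). -/

open Finset

variable {I : Type*} [DecidableEq I]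

/-- The most preferred object of `S` under the linear order `p`
(`d` is a junk default, used only when `S = ∅`). -/
def favIn (p : LinearOrder I) (S : Finset I) (d : I) : I :=
  if h : S.Nonempty then @Finset.max' I p S h else d

/-- The top choice of preference `p` (`d` is a junk default, used only if `I` is empty). -/
def topOf [Fintype I] (p : LinearOrder I) (d : I) : I := favIn p Finset.univ d

/-- The agents of `S` lying on a cycle of the pointing map `fun i => fav i S`
(each agent points to the owner of his favorite remaining object; a cycle
closes within at most `S.card` steps). -/
def cyclicAgents (fav : I → Finset I → I) (S : Finset I) : Finset I :=
  S.filter fun i => ∃ k ∈ Finset.range S.card, (fun j => fav j S)^[k + 1] i = i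

lemma cyclicAgents_subset (fav : I → Finset I → I) (S : Finset I) :
    cyclicAgents fav S ⊆ S := Finset.filter_subset _ _

/-- The TTC procedure on the set `S` of remaining agents: every agent of `S`
lying on a pointing cycle receives the object owned by the agent he points to
and is removed; the procedure is then repeated on the remaining agents.
(Agents outside `S` keep their endowments; when the pointing map sends `S`
into `S` — as is always the case for pointing maps induced by preferences —
there always is a cycle, so the degenerate `else` branch is never reached.) -/
def TTCaux (fav : I → Finset I → I) (S : Finset I) : I → I :=
  if hC : (cyclicAgents fav S).Nonempty then fun i =>
    if i ∈ cyclicAgents fav S then fav i S else TTCaux fav (S \ cyclicAgents fav S) i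
  else id
termination_by S.card
decreasing_by
  exact Finset.card_lt_card (Finset.sdiff_ssubset (cyclicAgents_subset fav S) hC)

/-- The Top Trading Cycles mechanism. -/
def TTC [Fintype I] (P : I → LinearOrder I) : I → I :=
  TTCaux (fun i S => favIn (P i) S i) Finset.univ

section Axioms

variable [Fintype I]

/-- `ψ` is locally unanimous on the domain `D`: whenever some nonempty set `J`
of agents admits a unanimously best suballocation `μ` (a bijection of `J` onto
its endowment set `O_J = J` giving every member his top choice), `ψ` implements `μ` on `J`. -/
def LocallyUnanimous (D : Set (LinearOrder I)) (ψ : (I → LinearOrder I) → I → I) : Prop :=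
  ∀ P : I → LinearOrder I, (∀ i, P i ∈ D) →
    ∀ J : Finset I, J.Nonempty → ∀ μ : I → I, Set.BijOn μ ↑J ↑J →
      (∀ i ∈ J, μ i = topOf (P i) i) → ∀ i ∈ J, ψ P i = μ i

/-- Strategy-proofness of `ψ` on the domain `D`. -/
def StrategyProof (D : Set (LinearOrder I)) (ψ : (I → LinearOrder I) → I → I) : Prop :=
  ∀ P : I → LinearOrder I, (∀ i, P i ∈ D) → ∀ i : I, ∀ q ∈ D,
    ¬ (P i).lt (ψ P i) (ψ (Function.update P i q) i)

/-- Group strategy-proofness of `ψ` on the domain `D`. -/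
def GroupStrategyProof (D : Set (LinearOrder I)) (ψ : (I → LinearOrder I) → I → I) : Prop :=
  ∀ P P' : I → LinearOrder I, (∀ i, P i ∈ D) → (∀ i, P' i ∈ D) →
    ∀ J : Finset I, J.Nonempty → (∀ i ∉ J, P' i = P i) →
    ¬ ((∀ i ∈ J, (P i).le (ψ P i) (ψ P' i)) ∧ ∃ j ∈ J, (P j).lt (ψ P j) (ψ P' j))

/-- Individual rationality of `ψ` on the domain `D` (agent `i`'s endowment is `i`). -/
def IndividuallyRational (D : Set (LinearOrder I)) (ψ : (I → LinearOrder I) → I → I) : Prop :=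
  ∀ P : I → LinearOrder I, (∀ i, P i ∈ D) → ∀ i : I, (P i).le i (ψ P i)

/-- Top-one Richness of the domain `D`. -/
def TopOneRich (D : Set (LinearOrder I)) : Prop :=
  ∀ o : I, ∃ p ∈ D, topOf p o = o

/-- Top-two Richness of the domain `D`: any two distinct objects can be
reported as the top two choices, in either order. -/
def TopTwoRich (D : Set (LinearOrder I)) : Prop :=
  ∀ o o' : I, o ≠ o' → ∃ p ∈ D, topOf p o = o ∧ ∀ x : I, x ≠ o → p.le x o'

/-- `J` forms a cycle of the pointing map `f`: `J` is nonempty, closed under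
`f`, and every member is reachable from every member by iterating `f`. -/
def IsCycleIn (f : I → I) (J : Finset I) : Prop :=
  J.Nonempty ∧ (∀ i ∈ J, f i ∈ J) ∧ ∀ i ∈ J, ∀ j ∈ J, ∃ k : ℕ, f^[k] i = j

end Axioms

-- tests
lemma my_favIn_mem (p : LinearOrder I) {S : Finset I} (h : S.Nonempty) (d : I) :
    favIn p S d ∈ S := by
  rw [favIn, dif_pos h]; exact @Finset.max'_mem I p S h

lemma my_le_favIn (p : LinearOrder I) {S : Finset I} {x : I} (hx : x ∈ S) (d : I) :
    p.le x (favIn p S d) := by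
  rw [favIn, dif_pos ⟨x, hx⟩]; exact @Finset.le_max' I p S x hx

lemma my_favIn_eq_of_le (p : LinearOrder I) {S : Finset I} {x : I} (hx : x ∈ S)
    (hmax : ∀ y ∈ S, p.le y x) (d : I) : favIn p S d = x := by
  rw [favIn, dif_pos ⟨x, hx⟩]
  exact @le_antisymm I p.toPartialOrder _ _ (hmax _ (@Finset.max'_mem I p S ⟨x, hx⟩)) (@Finset.le_max' I p S x hx)

lemma my_TTCaux_of_mem {fav : I → Finset I → I} {S : Finset I} {x : I}
    (hx : x ∈ cyclicAgents fav S) : TTCaux fav S x = fav x S := by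
  rw [TTCaux, dif_pos ⟨x, hx⟩]; exact if_pos hx

lemma my_TTCaux_of_notMem {fav : I → Finset I → I} {S : Finset I} {x : I}
    (hC : (cyclicAgents fav S).Nonempty) (hx : x ∉ cyclicAgents fav S) :
    TTCaux fav S x = TTCaux fav (S \ cyclicAgents fav S) x := by
  conv_lhs => rw [TTCaux]
  rw [dif_pos hC]; exact if_neg hx

lemma my_mem_cyclicAgents {fav : I → Finset I → I} {S : Finset I} {x : I}
    (hx : x ∈ S) {m : ℕ} (hm : 0 < m) (hmc : m ≤ S.card)
    (hper : (fun j => fav j S)^[m] x = x) : x ∈ cyclicAgents fav S := by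
  rw [cyclicAgents, Finset.mem_filter]
  refine ⟨hx, m - 1, Finset.mem_range.2 (by omega), ?_⟩
  rwa [Nat.sub_add_cancel hm]

lemma my_notMem_cyclicAgents {fav : I → Finset I → I} {S : Finset I} {x : I}
    (A : Finset I) (hxA : x ∉ A) (h1 : fav x S ∈ A) (hA : ∀ y ∈ A, fav y S ∈ A) :
    x ∉ cyclicAgents fav S := by
  rw [cyclicAgents, Finset.mem_filter]
  rintro ⟨-, k, -, hk⟩
  have hin : ∀ m, (fun j => fav j S)^[m + 1] x ∈ A := by
    intro m; induction m with
    | zero => simpa using h1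
    | succ n ih => rw [Function.iterate_succ_apply']; exact hA _ ih
  exact hxA (hk ▸ hin k)

lemma my_TTCaux_self {fav : I → Finset I → I} {S : Finset I} {x : I}
    (hx : x ∈ S) (hself : fav x S = x) : TTCaux fav S x = x := by
  have hc : x ∈ cyclicAgents fav S :=
    my_mem_cyclicAgents hx one_pos (Finset.card_pos.2 ⟨x, hx⟩) (by simpa using hself)
  rw [my_TTCaux_of_mem hc, hself]

lemma my_TTCaux_two {fav : I → Finset I → I} {S : Finset I} {x y : I}
    (hx : x ∈ S) (hy : y ∈ S) (hxy : x ≠ y)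
    (hfx : fav x S = y) (hfy : fav y S = x) : TTCaux fav S x = y := by
  have hc : x ∈ cyclicAgents fav S := by
    refine my_mem_cyclicAgents hx two_pos (Finset.one_lt_card.2 ⟨x, hx, y, hy, hxy⟩) ?_
    show (fun j => fav j S)^[2] x = x
    rw [show (2:ℕ) = 1 + 1 from rfl, Function.iterate_add_apply]
    simp [hfx, hfy]
  rw [my_TTCaux_of_mem hc, hfx]

lemma my_TTCaux_three {fav : I → Finset I → I} {S : Finset I} {x y z : I}
    (hx : x ∈ S) (hy : y ∈ S) (hz : z ∈ S) (hxy : x ≠ y) (hxz : x ≠ z) (hyz : y ≠ z)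
    (hfx : fav x S = y) (hfy : fav y S = z) (hfz : fav z S = x) : TTCaux fav S x = y := by
  have h3 : 3 ≤ S.card := by
    have hsub : ({x, y, z} : Finset I) ⊆ S := by
      intro a ha; simp at ha; rcases ha with rfl|rfl|rfl <;> assumption
    have : ({x, y, z} : Finset I).card = 3 := by
      rw [Finset.card_insert_of_notMem (by simp [hxy, hxz]),
        Finset.card_insert_of_notMem (by simp [hyz]), Finset.card_singleton]
    calc 3 = ({x, y, z} : Finset I).card := this.symm
      _ ≤ S.card := Finset.card_le_card hsub
  have hc : x ∈ cyclicAgents fav S := by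
    refine my_mem_cyclicAgents hx three_pos h3 ?_
    show (fun j => fav j S)^[3] x = x
    rw [show (3:ℕ) = 1 + 1 + 1 from rfl, Function.iterate_add_apply, Function.iterate_add_apply]
    simp [hfx, hfy, hfz]
  rw [my_TTCaux_of_mem hc, hfx]

lemma my_TTCaux_pair_other {fav : I → Finset I → I} {a b : I} (hab : a ≠ b)
    (ha : fav a {a, b} = b) (hb : fav b {a, b} = b) (ha1 : fav a {a} = a) :
    TTCaux fav {a, b} a = a := by
  have hbmem : b ∈ ({a, b} : Finset I) := by simp
  have hbc : b ∈ cyclicAgents fav {a, b} :=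
    my_mem_cyclicAgents hbmem one_pos (Finset.card_pos.2 ⟨b, hbmem⟩) (by simpa using hb)
  have hac : a ∉ cyclicAgents fav {a, b} :=
    my_notMem_cyclicAgents {b} (by simp [hab]) (by simp [ha]) (by simp [hb])
  have hCeq : cyclicAgents fav {a, b} = {b} := by
    apply Finset.Subset.antisymm
    · intro x hxC
      have hx2 := cyclicAgents_subset fav {a, b} hxC
      simp only [Finset.mem_insert, Finset.mem_singleton] at hx2
      rcases hx2 with rfl | rfl
      · exact absurd hxC hac
      · simp
    · intro x hx; simp only [Finset.mem_singleton] at hx; subst hx; exact hbc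
  rw [my_TTCaux_of_notMem ⟨b, hbc⟩ hac, hCeq]
  have hsd : ({a, b} : Finset I) \ {b} = {a} := by
    ext x
    simp only [Finset.mem_sdiff, Finset.mem_insert, Finset.mem_singleton]
    constructor
    · rintro ⟨rfl | rfl, hx⟩
      · rfl
      · exact absurd rfl hx
    · rintro rfl; exact ⟨Or.inl rfl, hab⟩
  rw [hsd]
  exact my_TTCaux_self (by simp) ha1

lemma my_cyclicAgents_nonempty {fav : I → Finset I → I} {S : Finset I}
    (hne : S.Nonempty) (hmap : ∀ x ∈ S, fav x S ∈ S) :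
    (cyclicAgents fav S).Nonempty := by
  obtain ⟨i, hi⟩ := hne
  set g := fun j => fav j S with hg
  have hiter : ∀ m, g^[m] i ∈ S := by
    intro m; induction m with
    | zero => simpa using hi
    | succ n ih => rw [Function.iterate_succ_apply']; exact hmap _ ih
  obtain ⟨t1, ht1, t2, ht2, hne12, heq⟩ :=
    Finset.exists_ne_map_eq_of_card_lt_of_maps_to
      (s := Finset.range (S.card + 1)) (t := S) (by simp) (fun t _ => hiter t)
  rw [Finset.mem_range] at ht1 ht2
  wlog hlt : t1 < t2 generalizing t1 t2
  · exact this t2 ht2 t1 ht1 hne12.symm heq.symm (by omega)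
  refine ⟨g^[t1] i, my_mem_cyclicAgents (hiter t1) (m := t2 - t1) (by omega) (by omega) ?_⟩
  show g^[t2 - t1] (g^[t1] i) = g^[t1] i
  rw [← Function.iterate_add_apply, Nat.sub_add_cancel (by omega)]
  exact heq.symm

lemma my_iterate_cancel {g : I → I} {J : Finset I}
    (hmap : ∀ x ∈ J, g x ∈ J) (hinj : ∀ x ∈ J, ∀ y ∈ J, g x = g y → x = y) :
    ∀ s, ∀ x ∈ J, ∀ y ∈ J, g^[s] x = g^[s] y → x = y := by
  intro s
  induction s with
  | zero => intro x _ y _ h; simpa using h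
  | succ n ih =>
    intro x hx y hy h
    rw [Function.iterate_succ_apply, Function.iterate_succ_apply] at h
    exact hinj x hx y hy (ih _ (hmap x hx) _ (hmap y hy) h)

lemma my_period_of_inj {g : I → I} {J : Finset I}
    (hmap : ∀ x ∈ J, g x ∈ J) (hinj : ∀ x ∈ J, ∀ y ∈ J, g x = g y → x = y)
    {x : I} (hx : x ∈ J) : ∃ m, 0 < m ∧ m ≤ J.card ∧ g^[m] x = x := by
  have hiter : ∀ m, g^[m] x ∈ J := by
    intro m; induction m with
    | zero => simpa using hx
    | succ n ih => rw [Function.iterate_succ_apply']; exact hmap _ ih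
  obtain ⟨t1, ht1, t2, ht2, hne12, heq⟩ :=
    Finset.exists_ne_map_eq_of_card_lt_of_maps_to
      (s := Finset.range (J.card + 1)) (t := J) (by simp) (fun t _ => hiter t)
  rw [Finset.mem_range] at ht1 ht2
  wlog hlt : t1 < t2 generalizing t1 t2
  · exact this t2 ht2 t1 ht1 hne12.symm heq.symm (by omega)
  refine ⟨t2 - t1, by omega, by omega, ?_⟩
  refine (my_iterate_cancel hmap hinj t1 (g^[t2-t1] x) (hiter _) x hx ?_)
  rw [← Function.iterate_add_apply, Nat.add_sub_cancel' (by omega : t1 ≤ t2)]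
  exact heq.symm

lemma my_favIn_default {p : LinearOrder I} {S : Finset I} (h : S.Nonempty) (d d' : I) :
    favIn p S d = favIn p S d' := by rw [favIn, favIn, dif_pos h, dif_pos h]

lemma my_favIn_singleton (p : LinearOrder I) (a d : I) : favIn p {a} d = a := by
  rw [favIn, dif_pos ⟨a, Finset.mem_singleton_self a⟩]
  exact @Finset.max'_singleton I p a

lemma my_favIn_pair_mem (p : LinearOrder I) (a b d : I) :
    favIn p {a, b} d = a ∨ favIn p {a, b} d = b := by
  have := my_favIn_mem p (S := {a, b}) ⟨a, by simp⟩ d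
  simpa using this

lemma my_lt_of_ne_of_le (p : LinearOrder I) {x y : I} (h : x ≠ y) (hle : p.le x y) :
    p.lt x y := @lt_of_le_of_ne I p.toPartialOrder x y hle h

lemma my_not_lt (p : LinearOrder I) {x y : I} (hle : p.le x y) : ¬ p.lt y x :=
  @not_lt_of_ge I p.toPreorder x y hle

lemma my_favIn_pair_eq_right (p : LinearOrder I) {a b : I} (hab : a ≠ b) (d : I)
    (h : favIn p {a, b} d = b) : p.lt a b :=
  my_lt_of_ne_of_le p hab (h ▸ my_le_favIn p (by simp) d)

lemma my_favIn_pair_eq_left (p : LinearOrder I) {a b : I} (hab : a ≠ b) (d : I)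
    (h : favIn p {a, b} d = a) : p.lt b a :=
  my_lt_of_ne_of_le p (Ne.symm hab) (h ▸ my_le_favIn p (by simp) d)

section FT
variable [Fintype I]

lemma my_topOf_default {p : LinearOrder I} [Nonempty I] (d d' : I) :
    topOf p d = topOf p d' := my_favIn_default Finset.univ_nonempty d d'

lemma my_favIn_of_top_mem {p : LinearOrder I} {S : Finset I} {d₀ : I}
    (h : topOf p d₀ ∈ S) (d : I) : favIn p S d = topOf p d₀ :=
  my_favIn_eq_of_le p h (fun y _ => my_le_favIn p (Finset.mem_univ y) d₀) d

lemma my_univ3 (hcard : Fintype.card I = 3) (i : I) :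
    ∃ j k, i ≠ j ∧ i ≠ k ∧ j ≠ k ∧ (Finset.univ : Finset I) = {i, j, k} := by
  obtain ⟨a, b, c, hab, hac, hbc, huniv⟩ :=
    Finset.card_eq_three.1 (show (Finset.univ : Finset I).card = 3 by
      rw [Finset.card_univ, hcard])
  have hi : i ∈ ({a, b, c} : Finset I) := huniv ▸ Finset.mem_univ i
  simp only [Finset.mem_insert, Finset.mem_singleton] at hi
  rcases hi with rfl | rfl | rfl
  · exact ⟨b, c, hab, hac, hbc, huniv⟩
  · refine ⟨a, c, hab.symm, hbc, hac, ?_⟩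
    rw [huniv]; ext x; simp; tauto
  · refine ⟨a, b, hac.symm, hbc.symm, hab, ?_⟩
    rw [huniv]; ext x; simp; tauto

lemma my_cyc_univ_single {fav : I → Finset I → I} {i j k : I}
    (huniv : (Finset.univ : Finset I) = {i, j, k})
    (hj : j ∈ cyclicAgents fav Finset.univ)
    (hi : i ∉ cyclicAgents fav Finset.univ) (hk : k ∉ cyclicAgents fav Finset.univ) :
    cyclicAgents fav Finset.univ = {j} := by
  apply Finset.Subset.antisymm
  · intro x hx
    have hx3 : x ∈ ({i, j, k} : Finset I) := huniv ▸ Finset.mem_univ x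
    simp only [Finset.mem_insert, Finset.mem_singleton] at hx3
    rcases hx3 with rfl | rfl | rfl
    · exact absurd hx hi
    · simp
    · exact absurd hx hk
  · intro x hx; simp only [Finset.mem_singleton] at hx; subst hx; exact hj

lemma my_cyc_univ_pair {fav : I → Finset I → I} {i j k : I}
    (huniv : (Finset.univ : Finset I) = {i, j, k})
    (hj : j ∈ cyclicAgents fav Finset.univ) (hk : k ∈ cyclicAgents fav Finset.univ)
    (hi : i ∉ cyclicAgents fav Finset.univ) :
    cyclicAgents fav Finset.univ = {j, k} := by
  apply Finset.Subset.antisymm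
  · intro x hx
    have hx3 : x ∈ ({i, j, k} : Finset I) := huniv ▸ Finset.mem_univ x
    simp only [Finset.mem_insert, Finset.mem_singleton] at hx3
    rcases hx3 with rfl | rfl | rfl
    · exact absurd hx hi
    · simp
    · simp
  · intro x hx
    simp only [Finset.mem_insert, Finset.mem_singleton] at hx
    rcases hx with rfl | rfl
    · exact hj
    · exact hk

lemma my_sdiff_single {i j k : I} (huniv : (Finset.univ : Finset I) = {i, j, k})
    (hij : i ≠ j) (hik : i ≠ k) (hjk : j ≠ k) :
    (Finset.univ : Finset I) \ {j} = {i, k} := by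
  rw [huniv]; ext x
  simp only [Finset.mem_sdiff, Finset.mem_insert, Finset.mem_singleton]
  constructor
  · rintro ⟨rfl | rfl | rfl, hx⟩
    · exact Or.inl rfl
    · exact absurd rfl hx
    · exact Or.inr rfl
  · rintro (rfl | rfl)
    · exact ⟨Or.inl rfl, hij⟩
    · exact ⟨Or.inr (Or.inr rfl), Ne.symm hjk⟩

lemma my_sdiff_pair {i j k : I} (huniv : (Finset.univ : Finset I) = {i, j, k})
    (hij : i ≠ j) (hik : i ≠ k) :
    (Finset.univ : Finset I) \ {j, k} = {i} := by
  rw [huniv]; ext x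
  simp only [Finset.mem_sdiff, Finset.mem_insert, Finset.mem_singleton, not_or]
  constructor
  · rintro ⟨rfl | rfl | rfl, hx1, hx2⟩
    · rfl
    · exact absurd rfl hx1
    · exact absurd rfl hx2
  · rintro rfl; exact ⟨Or.inl rfl, hij, hik⟩

end FT

lemma my_pair_resolve {fav : I → Finset I → I} {a b : I} (hab : a ≠ b)
    (hb : fav b {a, b} = a) (hmem : fav a {a, b} = a ∨ fav a {a, b} = b) :
    TTCaux fav {a, b} a = fav a {a, b} := by
  rcases hmem with h | h
  · rw [h]; exact my_TTCaux_self (by simp) h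
  · rw [h]; exact my_TTCaux_two (by simp) (by simp) hab h hb

lemma my_pair_stuck {fav : I → Finset I → I} {a b : I} (hab : a ≠ b)
    (hb : fav b {a, b} = b) (hmem : fav a {a, b} = a ∨ fav a {a, b} = b)
    (ha1 : fav a {a} = a) : TTCaux fav {a, b} a = a := by
  rcases hmem with h | h
  · exact my_TTCaux_self (by simp) h
  · exact my_TTCaux_pair_other hab h hb ha1

section FT2
variable [Fintype I]

lemma my_univ_comm {i j k : I} (huniv : (Finset.univ : Finset I) = {i, j, k}) :
    (Finset.univ : Finset I) = {i, k, j} := by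
  rw [huniv]; ext x; simp; tauto

-- (tj = i, tk = i): agent i always on a first-round cycle
lemma my_leaf_both_i {fav : I → Finset I → I} {i j k : I}
    (hij : i ≠ j) (hik : i ≠ k)
    (hτ3 : fav i Finset.univ = i ∨ fav i Finset.univ = j ∨ fav i Finset.univ = k)
    (hgj : fav j Finset.univ = i) (hgk : fav k Finset.univ = i) :
    TTCaux fav Finset.univ i = fav i Finset.univ := by
  rcases hτ3 with h | h | h
  · rw [h]; exact my_TTCaux_self (Finset.mem_univ i) h
  · rw [h]; exact my_TTCaux_two (Finset.mem_univ i) (Finset.mem_univ j) hij h hgj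
  · rw [h]; exact my_TTCaux_two (Finset.mem_univ i) (Finset.mem_univ k) hik h hgk

-- (tj = i, tk = j): i always on a cycle (possibly 3-cycle)
lemma my_leaf_chain {fav : I → Finset I → I} {i j k : I}
    (hij : i ≠ j) (hik : i ≠ k) (hjk : j ≠ k)
    (hτ3 : fav i Finset.univ = i ∨ fav i Finset.univ = j ∨ fav i Finset.univ = k)
    (hgj : fav j Finset.univ = i) (hgk : fav k Finset.univ = j) :
    TTCaux fav Finset.univ i = fav i Finset.univ := by
  rcases hτ3 with h | h | h
  · rw [h]; exact my_TTCaux_self (Finset.mem_univ i) h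
  · rw [h]; exact my_TTCaux_two (Finset.mem_univ i) (Finset.mem_univ j) hij h hgj
  · rw [h]
    exact my_TTCaux_three (Finset.mem_univ i) (Finset.mem_univ k) (Finset.mem_univ j)
      hik hij (Ne.symm hjk) h hgk hgj

-- (tj = i, tk = k): opportunity set {i, j}
lemma my_leaf_opp {fav : I → Finset I → I} {i j k : I}
    (hij : i ≠ j) (hik : i ≠ k) (hjk : j ≠ k)
    (huniv : (Finset.univ : Finset I) = {i, j, k})
    (hτ3 : fav i Finset.univ = i ∨ fav i Finset.univ = j ∨ fav i Finset.univ = k)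
    (hgj : fav j Finset.univ = i) (hgk : fav k Finset.univ = k)
    (hpj : fav j {i, j} = i)
    (hpi3 : fav i {i, j} = i ∨ fav i {i, j} = j)
    (hcohi : fav i Finset.univ = i → fav i {i, j} = i)
    (hcohj : fav i Finset.univ = j → fav i {i, j} = j) :
    TTCaux fav Finset.univ i = fav i {i, j} := by
  rcases hτ3 with h | h | h
  · rw [hcohi h]; exact my_TTCaux_self (Finset.mem_univ i) h
  · rw [hcohj h]; exact my_TTCaux_two (Finset.mem_univ i) (Finset.mem_univ j) hij h hgj
  · -- τ = k : round 1 removes {k}, recurse on {i, j}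
    have hkc : k ∈ cyclicAgents fav Finset.univ :=
      my_mem_cyclicAgents (Finset.mem_univ k) one_pos
        (Finset.card_pos.2 ⟨k, Finset.mem_univ k⟩) (by simpa using hgk)
    have hic : i ∉ cyclicAgents fav Finset.univ :=
      my_notMem_cyclicAgents {k} (by simp [hik]) (by simp [h]) (by simp [hgk])
    have hjc : j ∉ cyclicAgents fav Finset.univ :=
      my_notMem_cyclicAgents {i, k} (by simp [Ne.symm hij, hjk]) (by simp [hgj])
        (by intro y hy; simp at hy; rcases hy with rfl | rfl <;> simp [h, hgk])
    have hC : cyclicAgents fav Finset.univ = {k} :=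
      my_cyc_univ_single (my_univ_comm huniv) hkc hic hjc
    rw [my_TTCaux_of_notMem ⟨k, hkc⟩ hic, hC,
      my_sdiff_single (my_univ_comm huniv) hik hij (Ne.symm hjk)]
    exact my_pair_resolve hij hpj hpi3

-- (tj = k, tk = k), with fav j {i,j} = i : opportunity set {i, j}
lemma my_leaf_f1 {fav : I → Finset I → I} {i j k : I}
    (hij : i ≠ j) (hik : i ≠ k) (hjk : j ≠ k)
    (huniv : (Finset.univ : Finset I) = {i, j, k})
    (hτ3 : fav i Finset.univ = i ∨ fav i Finset.univ = j ∨ fav i Finset.univ = k)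
    (hgj : fav j Finset.univ = k) (hgk : fav k Finset.univ = k)
    (hpj : fav j {i, j} = i)
    (hpi3 : fav i {i, j} = i ∨ fav i {i, j} = j)
    (hcohi : fav i Finset.univ = i → fav i {i, j} = i) :
    TTCaux fav Finset.univ i = fav i {i, j} := by
  have hkc : k ∈ cyclicAgents fav Finset.univ :=
    my_mem_cyclicAgents (Finset.mem_univ k) one_pos
      (Finset.card_pos.2 ⟨k, Finset.mem_univ k⟩) (by simpa using hgk)
  have drop : fav i Finset.univ = j ∨ fav i Finset.univ = k →
      TTCaux fav Finset.univ i = fav i {i, j} := by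
    intro h
    have hic : i ∉ cyclicAgents fav Finset.univ :=
      my_notMem_cyclicAgents {j, k} (by simp [hij, hik])
        (by rcases h with h | h <;> simp [h])
        (by intro y hy; simp at hy; rcases hy with rfl | rfl <;> simp [hgj, hgk])
    have hjc : j ∉ cyclicAgents fav Finset.univ :=
      my_notMem_cyclicAgents {k} (by simp [hjk]) (by simp [hgj]) (by simp [hgk])
    have hC : cyclicAgents fav Finset.univ = {k} :=
      my_cyc_univ_single (my_univ_comm huniv) hkc hic hjc
    rw [my_TTCaux_of_notMem ⟨k, hkc⟩ hic, hC,
      my_sdiff_single (my_univ_comm huniv) hik hij (Ne.symm hjk)]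
    exact my_pair_resolve hij hpj hpi3
  rcases hτ3 with h | h | h
  · rw [hcohi h]; exact my_TTCaux_self (Finset.mem_univ i) h
  · exact drop (Or.inl h)
  · exact drop (Or.inr h)

-- (tj = k, tk = k), with fav j {i,j} = j : opportunity set {i}
lemma my_leaf_f2 {fav : I → Finset I → I} {i j k : I}
    (hij : i ≠ j) (hik : i ≠ k) (hjk : j ≠ k)
    (huniv : (Finset.univ : Finset I) = {i, j, k})
    (hτ3 : fav i Finset.univ = i ∨ fav i Finset.univ = j ∨ fav i Finset.univ = k)
    (hgj : fav j Finset.univ = k) (hgk : fav k Finset.univ = k)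
    (hpj : fav j {i, j} = j)
    (hpi3 : fav i {i, j} = i ∨ fav i {i, j} = j)
    (ha1 : fav i {i} = i) :
    TTCaux fav Finset.univ i = i := by
  have hkc : k ∈ cyclicAgents fav Finset.univ :=
    my_mem_cyclicAgents (Finset.mem_univ k) one_pos
      (Finset.card_pos.2 ⟨k, Finset.mem_univ k⟩) (by simpa using hgk)
  have drop : fav i Finset.univ = j ∨ fav i Finset.univ = k →
      TTCaux fav Finset.univ i = i := by
    intro h
    have hic : i ∉ cyclicAgents fav Finset.univ :=
      my_notMem_cyclicAgents {j, k} (by simp [hij, hik])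
        (by rcases h with h | h <;> simp [h])
        (by intro y hy; simp at hy; rcases hy with rfl | rfl <;> simp [hgj, hgk])
    have hjc : j ∉ cyclicAgents fav Finset.univ :=
      my_notMem_cyclicAgents {k} (by simp [hjk]) (by simp [hgj]) (by simp [hgk])
    have hC : cyclicAgents fav Finset.univ = {k} :=
      my_cyc_univ_single (my_univ_comm huniv) hkc hic hjc
    rw [my_TTCaux_of_notMem ⟨k, hkc⟩ hic, hC,
      my_sdiff_single (my_univ_comm huniv) hik hij (Ne.symm hjk)]
    exact my_pair_stuck hij hpj hpi3 ha1
  rcases hτ3 with h | h | h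
  · exact my_TTCaux_self (Finset.mem_univ i) h
  · exact drop (Or.inl h)
  · exact drop (Or.inr h)

-- (tj = j, tk = k): opportunity set {i}
lemma my_leaf_aa {fav : I → Finset I → I} {i j k : I}
    (hij : i ≠ j) (hik : i ≠ k) (hjk : j ≠ k)
    (huniv : (Finset.univ : Finset I) = {i, j, k})
    (hτ3 : fav i Finset.univ = i ∨ fav i Finset.univ = j ∨ fav i Finset.univ = k)
    (hgj : fav j Finset.univ = j) (hgk : fav k Finset.univ = k)
    (ha1 : fav i {i} = i) :
    TTCaux fav Finset.univ i = i := by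
  have hjcy : j ∈ cyclicAgents fav Finset.univ :=
    my_mem_cyclicAgents (Finset.mem_univ j) one_pos
      (Finset.card_pos.2 ⟨j, Finset.mem_univ j⟩) (by simpa using hgj)
  have hkcy : k ∈ cyclicAgents fav Finset.univ :=
    my_mem_cyclicAgents (Finset.mem_univ k) one_pos
      (Finset.card_pos.2 ⟨k, Finset.mem_univ k⟩) (by simpa using hgk)
  rcases hτ3 with h | h | h
  · exact my_TTCaux_self (Finset.mem_univ i) h
  all_goals {
    have hic : i ∉ cyclicAgents fav Finset.univ :=
      my_notMem_cyclicAgents {j, k} (by simp [hij, hik]) (by simp [h])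
        (by intro y hy; simp at hy; rcases hy with rfl | rfl <;> simp [hgj, hgk])
    have hC : cyclicAgents fav Finset.univ = {j, k} :=
      my_cyc_univ_pair huniv hjcy hkcy hic
    rw [my_TTCaux_of_notMem ⟨j, hjcy⟩ hic, hC, my_sdiff_pair huniv hij hik]
    exact my_TTCaux_self (Finset.mem_singleton_self i) ha1
  }

-- (tj = k, tk = j): opportunity set {i}
lemma my_leaf_dd {fav : I → Finset I → I} {i j k : I}
    (hij : i ≠ j) (hik : i ≠ k) (hjk : j ≠ k)
    (huniv : (Finset.univ : Finset I) = {i, j, k})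
    (hτ3 : fav i Finset.univ = i ∨ fav i Finset.univ = j ∨ fav i Finset.univ = k)
    (hgj : fav j Finset.univ = k) (hgk : fav k Finset.univ = j)
    (ha1 : fav i {i} = i) :
    TTCaux fav Finset.univ i = i := by
  have h2 : 2 ≤ (Finset.univ : Finset I).card :=
    Finset.one_lt_card.2 ⟨j, Finset.mem_univ j, k, Finset.mem_univ k, hjk⟩
  have hjcy : j ∈ cyclicAgents fav Finset.univ := by
    refine my_mem_cyclicAgents (Finset.mem_univ j) two_pos h2 ?_
    show (fun x => fav x Finset.univ)^[2] j = j
    rw [show (2:ℕ) = 1 + 1 from rfl, Function.iterate_add_apply]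
    simp [hgj, hgk]
  have hkcy : k ∈ cyclicAgents fav Finset.univ := by
    refine my_mem_cyclicAgents (Finset.mem_univ k) two_pos h2 ?_
    show (fun x => fav x Finset.univ)^[2] k = k
    rw [show (2:ℕ) = 1 + 1 from rfl, Function.iterate_add_apply]
    simp [hgj, hgk]
  rcases hτ3 with h | h | h
  · exact my_TTCaux_self (Finset.mem_univ i) h
  all_goals {
    have hic : i ∉ cyclicAgents fav Finset.univ :=
      my_notMem_cyclicAgents {j, k} (by simp [hij, hik]) (by simp [h])
        (by intro y hy; simp at hy; rcases hy with rfl | rfl <;> simp [hgj, hgk])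
    have hC : cyclicAgents fav Finset.univ = {j, k} :=
      my_cyc_univ_pair huniv hjcy hkcy hic
    rw [my_TTCaux_of_notMem ⟨j, hjcy⟩ hic, hC, my_sdiff_pair huniv hij hik]
    exact my_TTCaux_self (Finset.mem_singleton_self i) ha1
  }

end FT2

section FT3
variable [Fintype I]

lemma my_OS (hcard : Fintype.card I = 3) (P : I → LinearOrder I) (i : I) :
    ∃ T : Finset I, i ∈ T ∧ ∀ r : LinearOrder I,
      TTC (Function.update P i r) i = favIn r T i := by
  obtain ⟨j, k, hij, hik, hjk, huniv⟩ := my_univ3 hcard i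
  have huneC : (Finset.univ : Finset I).Nonempty := ⟨i, Finset.mem_univ i⟩
  have hval3 : ∀ (p : LinearOrder I) (d : I),
      favIn p Finset.univ d = i ∨ favIn p Finset.univ d = j ∨ favIn p Finset.univ d = k := by
    intro p d
    have h2 : favIn p Finset.univ d ∈ ({i, j, k} : Finset I) := by
      rw [← huniv]; exact my_favIn_mem p huneC d
    simpa using h2
  have hupj : ∀ r : LinearOrder I, Function.update P i r j = P j :=
    fun r => Function.update_of_ne hij.symm r P
  have hupk : ∀ r : LinearOrder I, Function.update P i r k = P k :=
    fun r => Function.update_of_ne hik.symm r P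
  have hupi : ∀ r : LinearOrder I, Function.update P i r i = r :=
    fun r => Function.update_self i r P
  have ha1 : ∀ r : LinearOrder I, favIn (Function.update P i r i) {i} i = i :=
    fun r => my_favIn_singleton _ i i
  have htj3 := hval3 (P j) j
  have htk3 := hval3 (P k) k
  rcases htj3 with htj | htj | htj <;> rcases htk3 with htk | htk | htk
  -- case (i, i)
  · refine ⟨Finset.univ, Finset.mem_univ i, fun r => ?_⟩
    show TTCaux (fun x S => favIn (Function.update P i r x) S x) Finset.univ i
      = favIn r Finset.univ i
    rw [my_leaf_both_i hij hik (hval3 (Function.update P i r i) i)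
      (by rw [hupj r]; exact htj) (by rw [hupk r]; exact htk), hupi r]
  -- case (i, j)
  · refine ⟨Finset.univ, Finset.mem_univ i, fun r => ?_⟩
    show TTCaux (fun x S => favIn (Function.update P i r x) S x) Finset.univ i
      = favIn r Finset.univ i
    rw [my_leaf_chain hij hik hjk (hval3 (Function.update P i r i) i)
      (by rw [hupj r]; exact htj) (by rw [hupk r]; exact htk), hupi r]
  -- case (i, k) : T = {i, j}
  · refine ⟨{i, j}, by simp, fun r => ?_⟩
    show TTCaux (fun x S => favIn (Function.update P i r x) S x) Finset.univ i
      = favIn r {i, j} i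
    have hpj : favIn (Function.update P i r j) {i, j} j = i := by
      rw [hupj r]
      exact (my_favIn_of_top_mem (d₀ := j) (by simp [show topOf (P j) j = i from htj]) j).trans htj
    rw [my_leaf_opp hij hik hjk huniv (hval3 (Function.update P i r i) i)
      (by rw [hupj r]; exact htj) (by rw [hupk r]; exact htk) hpj
      (by rw [hupi r]; exact my_favIn_pair_mem r i j i)
      (by intro h; rw [hupi r] at h ⊢
          exact (my_favIn_of_top_mem (d₀ := i) (by simp [show topOf r i = i from h]) i).trans h)
      (by intro h; rw [hupi r] at h ⊢
          exact (my_favIn_of_top_mem (d₀ := i) (by simp [show topOf r i = j from h]) i).trans h),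
      hupi r]
  -- case (j, i) : T = {i, k}  (mirror of (i, k))
  · refine ⟨{i, k}, by simp, fun r => ?_⟩
    show TTCaux (fun x S => favIn (Function.update P i r x) S x) Finset.univ i
      = favIn r {i, k} i
    have hpk : favIn (Function.update P i r k) {i, k} k = i := by
      rw [hupk r]
      exact (my_favIn_of_top_mem (d₀ := k) (by simp [show topOf (P k) k = i from htk]) k).trans htk
    rw [my_leaf_opp hik hij (Ne.symm hjk) (my_univ_comm huniv)
      (by rcases hval3 (Function.update P i r i) i with h | h | h <;> tauto)
      (by rw [hupk r]; exact htk) (by rw [hupj r]; exact htj) hpk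
      (by rw [hupi r]; exact my_favIn_pair_mem r i k i)
      (by intro h; rw [hupi r] at h ⊢
          exact (my_favIn_of_top_mem (d₀ := i) (by simp [show topOf r i = i from h]) i).trans h)
      (by intro h; rw [hupi r] at h ⊢
          exact (my_favIn_of_top_mem (d₀ := i) (by simp [show topOf r i = k from h]) i).trans h),
      hupi r]
  -- case (j, j) : split on favIn (P k) {i,k} k
  · rcases my_favIn_pair_mem (P k) i k k with hmk | hmk
    · refine ⟨{i, k}, by simp, fun r => ?_⟩
      show TTCaux (fun x S => favIn (Function.update P i r x) S x) Finset.univ i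
        = favIn r {i, k} i
      rw [my_leaf_f1 hik hij (Ne.symm hjk) (my_univ_comm huniv)
        (by rcases hval3 (Function.update P i r i) i with h | h | h <;> tauto)
        (by rw [hupk r]; exact htk) (by rw [hupj r]; exact htj)
        (by rw [hupk r]; exact hmk)
        (by rw [hupi r]; exact my_favIn_pair_mem r i k i)
        (by intro h; rw [hupi r] at h ⊢
            exact (my_favIn_of_top_mem (d₀ := i) (by simp [show topOf r i = i from h]) i).trans h),
        hupi r]
    · refine ⟨{i}, by simp, fun r => ?_⟩
      show TTCaux (fun x S => favIn (Function.update P i r x) S x) Finset.univ i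
        = favIn r {i} i
      rw [my_leaf_f2 hik hij (Ne.symm hjk) (my_univ_comm huniv)
        (by rcases hval3 (Function.update P i r i) i with h | h | h <;> tauto)
        (by rw [hupk r]; exact htk) (by rw [hupj r]; exact htj)
        (by rw [hupk r]; exact hmk)
        (by rw [hupi r]; exact my_favIn_pair_mem r i k i) (ha1 r),
        my_favIn_singleton r i i]
  -- case (j, k) : T = {i}
  · refine ⟨{i}, by simp, fun r => ?_⟩
    show TTCaux (fun x S => favIn (Function.update P i r x) S x) Finset.univ i
      = favIn r {i} i
    rw [my_leaf_aa hij hik hjk huniv (hval3 (Function.update P i r i) i)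
      (by rw [hupj r]; exact htj) (by rw [hupk r]; exact htk) (ha1 r),
      my_favIn_singleton r i i]
  -- case (k, i) : T = univ (mirror of (i, j))
  · refine ⟨Finset.univ, Finset.mem_univ i, fun r => ?_⟩
    show TTCaux (fun x S => favIn (Function.update P i r x) S x) Finset.univ i
      = favIn r Finset.univ i
    rw [my_leaf_chain hik hij (Ne.symm hjk)
      (by rcases hval3 (Function.update P i r i) i with h | h | h <;> tauto)
      (by rw [hupk r]; exact htk) (by rw [hupj r]; exact htj), hupi r]
  -- case (k, j) : T = {i}
  · refine ⟨{i}, by simp, fun r => ?_⟩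
    show TTCaux (fun x S => favIn (Function.update P i r x) S x) Finset.univ i
      = favIn r {i} i
    rw [my_leaf_dd hij hik hjk huniv (hval3 (Function.update P i r i) i)
      (by rw [hupj r]; exact htj) (by rw [hupk r]; exact htk) (ha1 r),
      my_favIn_singleton r i i]
  -- case (k, k) : split on favIn (P j) {i,j} j
  · rcases my_favIn_pair_mem (P j) i j j with hmj | hmj
    · refine ⟨{i, j}, by simp, fun r => ?_⟩
      show TTCaux (fun x S => favIn (Function.update P i r x) S x) Finset.univ i
        = favIn r {i, j} i
      rw [my_leaf_f1 hij hik hjk huniv (hval3 (Function.update P i r i) i)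
        (by rw [hupj r]; exact htj) (by rw [hupk r]; exact htk)
        (by rw [hupj r]; exact hmj)
        (by rw [hupi r]; exact my_favIn_pair_mem r i j i)
        (by intro h; rw [hupi r] at h ⊢
            exact (my_favIn_of_top_mem (d₀ := i) (by simp [show topOf r i = i from h]) i).trans h),
        hupi r]
    · refine ⟨{i}, by simp, fun r => ?_⟩
      show TTCaux (fun x S => favIn (Function.update P i r x) S x) Finset.univ i
        = favIn r {i} i
      rw [my_leaf_f2 hij hik hjk huniv (hval3 (Function.update P i r i) i)
        (by rw [hupj r]; exact htj) (by rw [hupk r]; exact htk)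
        (by rw [hupj r]; exact hmj)
        (by rw [hupi r]; exact my_favIn_pair_mem r i j i) (ha1 r),
        my_favIn_singleton r i i]

end FT3

lemma my_cyclic_spec {fav : I → Finset I → I} {S : Finset I} {x : I}
    (hx : x ∈ cyclicAgents fav S) :
    ∃ m, 0 < m ∧ m ≤ S.card ∧ (fun j => fav j S)^[m] x = x := by
  rw [cyclicAgents, Finset.mem_filter] at hx
  obtain ⟨-, k, hk, h⟩ := hx
  rw [Finset.mem_range] at hk
  exact ⟨k + 1, by omega, by omega, h⟩

lemma my_swap_bijOn {a b : I} :
    Set.BijOn (⇑(Equiv.swap a b)) ↑({a, b} : Finset I) ↑({a, b} : Finset I) := by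
  have him : (⇑(Equiv.swap a b)) '' ↑({a, b} : Finset I) = ↑({a, b} : Finset I) := by
    rw [Finset.coe_insert, Finset.coe_singleton, Set.image_pair]
    rw [Equiv.swap_apply_left, Equiv.swap_apply_right, Set.pair_comm]
  refine ⟨fun x hx => him ▸ Set.mem_image_of_mem _ hx, ?_, ?_⟩
  · exact Set.injOn_of_injective (Equiv.injective _)
  · rw [Set.SurjOn, him]

section FT4
variable [Fintype I]

lemma my_TTC_on_topcycle (P : I → LinearOrder I) {J : Finset I} {μ : I → I}
    (hbij : Set.BijOn μ ↑J ↑J) (hμ : ∀ x ∈ J, μ x = topOf (P x) x) :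
    ∀ x ∈ J, TTC P x = μ x := by
  intro x hx
  set g := fun y => favIn (P y) Finset.univ y with hg
  have hgμ : ∀ y ∈ J, g y = μ y := fun y hy => (hμ y hy).symm
  have hmap : ∀ y ∈ J, g y ∈ J := by
    intro y hy
    rw [hgμ y hy]
    exact Finset.mem_coe.1 (hbij.mapsTo (Finset.mem_coe.2 hy))
  have hinj : ∀ y ∈ J, ∀ z ∈ J, g y = g z → y = z := by
    intro y hy z hz hyz
    exact hbij.injOn (Finset.mem_coe.2 hy) (Finset.mem_coe.2 hz)
      (by rw [← hgμ y hy, ← hgμ z hz]; exact hyz)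
  obtain ⟨m, hm0, hmc, hper⟩ := my_period_of_inj hmap hinj hx
  have hcy : x ∈ cyclicAgents (fun y S => favIn (P y) S y) Finset.univ :=
    my_mem_cyclicAgents (Finset.mem_univ x) hm0
      (le_trans hmc (Finset.card_le_univ J)) hper
  show TTCaux (fun y S => favIn (P y) S y) Finset.univ x = μ x
  rw [my_TTCaux_of_mem hcy]
  exact hgμ x hx

-- first round cyclic agents: the pointing map is a bijection on them
lemma my_cyc_bijOn (P : I → LinearOrder I) :
    ∀ (C : Finset I), C = cyclicAgents (fun y S => favIn (P y) S y) Finset.univ →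
    (∀ x ∈ C, favIn (P x) Finset.univ x ∈ C) ∧
    (∀ x ∈ C, ∀ y ∈ C, favIn (P x) Finset.univ x = favIn (P y) Finset.univ y → x = y) := by
  intro C hCdef
  set g := fun y => favIn (P y) Finset.univ y with hg
  have hspec : ∀ x ∈ C, ∃ m, 0 < m ∧ m ≤ (Finset.univ : Finset I).card ∧ g^[m] x = x := by
    intro x hx; rw [hCdef] at hx; exact my_cyclic_spec hx
  have hfix : ∀ {x m}, g^[m] x = x → ∀ n, (g^[m])^[n] x = x := by
    intro x m h n
    induction n with
    | zero => rfl
    | succ p ih => rw [Function.iterate_succ_apply', ih, h]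
  constructor
  · intro x hx
    obtain ⟨m, hm0, hmc, hper⟩ := hspec x hx
    have h2 : g^[m] (g x) = g x := by
      rw [← Function.iterate_succ_apply, Function.iterate_succ_apply', hper]
    rw [hCdef]
    exact my_mem_cyclicAgents (Finset.mem_univ _) hm0 hmc h2
  · intro x hx y hy hxy
    obtain ⟨mx, hmx0, -, hpx⟩ := hspec x hx
    obtain ⟨my', hmy0, -, hpy⟩ := hspec y hy
    have hNx : g^[mx * my'] x = x := by
      rw [Function.iterate_mul]; exact hfix hpx my'
    have hNy : g^[mx * my'] y = y := by
      rw [mul_comm, Function.iterate_mul]; exact hfix hpy mx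
    have hN1 : 1 ≤ mx * my' := Nat.one_le_iff_ne_zero.2 (by positivity)
    have : g^[mx * my'] x = g^[mx * my'] y := by
      rw [show mx * my' = (mx * my' - 1) + 1 by omega, Function.iterate_succ_apply,
        Function.iterate_succ_apply]
      show g^[mx * my' - 1] (g x) = g^[mx * my' - 1] (g y)
      rw [show g x = g y from hxy]
    rw [hNx, hNy] at this
    exact this

end FT4

section FT5
variable [Fintype I]

lemma my_forward (hcard : Fintype.card I = 3) (D : Set (LinearOrder I)) (hD : TopOneRich D)
    (ψ : (I → LinearOrder I) → I → I)
    (hψ : ∀ P : I → LinearOrder I, (∀ i, P i ∈ D) → Function.Bijective (ψ P))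
    (hLU : LocallyUnanimous D ψ) (hSP : StrategyProof D ψ)
    (P : I → LinearOrder I) (hP : ∀ i, P i ∈ D) : ψ P = TTC P := by
  have hNe : Nonempty I := by rw [← Fintype.card_pos_iff]; omega
  have hIne : (Finset.univ : Finset I).Nonempty := Finset.univ_nonempty
  set C := cyclicAgents (fun y S => favIn (P y) S y) Finset.univ with hCdef
  obtain ⟨hgC, hinjC⟩ := my_cyc_bijOn P C hCdef
  set g := fun y => favIn (P y) Finset.univ y with hg
  have hCne : C.Nonempty :=
    my_cyclicAgents_nonempty hIne (fun x _ => my_favIn_mem (P x) hIne x)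
  have hCsub : C ⊆ Finset.univ := cyclicAgents_subset _ _
  have himg : C.image g = C := by
    apply Finset.eq_of_subset_of_card_le
    · intro y hy; obtain ⟨x, hx, rfl⟩ := Finset.mem_image.1 hy; exact hgC x hx
    · rw [Finset.card_image_of_injOn (fun x hx y hy => hinjC x hx y hy)]
  have hbijC : Set.BijOn g ↑C ↑C := by
    refine ⟨fun x hx => ?_, fun x hx y hy h => hinjC x hx y hy h, fun y hy => ?_⟩
    · exact Finset.mem_coe.2 (hgC x (Finset.mem_coe.1 hx))
    · obtain ⟨x, hx, hgx⟩ := Finset.mem_image.1 (himg ▸ (Finset.mem_coe.1 hy))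
      exact ⟨x, Finset.mem_coe.2 hx, hgx⟩
  have hψC : ∀ x ∈ C, ψ P x = g x := hLU P hP C hCne g hbijC (fun x _ => rfl)
  have hTTCC : ∀ x ∈ C, TTC P x = g x := fun x hx => my_TTCaux_of_mem hx
  have hψnotC : ∀ s, s ∉ C → ψ P s ∉ C := by
    intro s hs hmem
    obtain ⟨x, hx, hgx⟩ := Finset.mem_image.1 (himg ▸ hmem)
    have hxx : ψ P x = ψ P s := by rw [hψC x hx]; exact hgx
    exact hs (((hψ P hP).1 hxx) ▸ hx)
  have hc3 : (Finset.univ : Finset I).card = 3 := by rw [Finset.card_univ, hcard]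
  have hsd : ((Finset.univ : Finset I) \ C).card = 3 - C.card := by
    rw [Finset.card_sdiff_of_subset hCsub, hc3]
  have hCcard : 1 ≤ C.card := Finset.card_pos.2 hCne
  have hCle : C.card ≤ 3 := hc3 ▸ Finset.card_le_univ C
  have hcases : C.card = 3 ∨ C.card = 2 ∨ C.card = 1 := by omega
  rcases hcases with h3 | h2 | h1
  · -- everyone on a first-round cycle
    have hCuniv : ∀ x, x ∈ C := by
      intro x
      have : C = Finset.univ := Finset.eq_univ_of_card C (by rw [h3, hcard])
      rw [this]; exact Finset.mem_univ x
    funext x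
    rw [hψC x (hCuniv x), hTTCC x (hCuniv x)]
  · -- one agent left over
    obtain ⟨s, hs⟩ := Finset.card_eq_one.1 (show ((Finset.univ : Finset I) \ C).card = 1 by omega)
    have hsnot : s ∉ C := by
      have : s ∈ (Finset.univ : Finset I) \ C := by rw [hs]; exact Finset.mem_singleton_self s
      exact (Finset.mem_sdiff.1 this).2
    have hψs : ψ P s = s := by
      have h1 : ψ P s ∈ (Finset.univ : Finset I) \ C :=
        Finset.mem_sdiff.2 ⟨Finset.mem_univ _, hψnotC s hsnot⟩
      rw [hs] at h1; exact Finset.mem_singleton.1 h1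
    have hTs : TTC P s = s := by
      show TTCaux (fun y S => favIn (P y) S y) Finset.univ s = s
      rw [my_TTCaux_of_notMem hCne hsnot, ← hCdef, hs]
      exact my_TTCaux_self (Finset.mem_singleton_self s) (my_favIn_singleton (P s) s s)
    funext x
    by_cases hx : x ∈ C
    · rw [hψC x hx, hTTCC x hx]
    · have : x ∈ ({s} : Finset I) := by
        rw [← hs]; exact Finset.mem_sdiff.2 ⟨Finset.mem_univ _, hx⟩
      rw [Finset.mem_singleton.1 this, hψs, hTs]
  · -- two agents left over
    obtain ⟨c, hc⟩ := Finset.card_eq_one.1 h1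
    obtain ⟨a, b, hab, habs⟩ :=
      Finset.card_eq_two.1 (show ((Finset.univ : Finset I) \ C).card = 2 by omega)
    have hcC : c ∈ C := by rw [hc]; exact Finset.mem_singleton_self c
    have hmemab : ∀ x, x ∉ C → x ∈ ({a, b} : Finset I) := by
      intro x hx
      rw [← habs]; exact Finset.mem_sdiff.2 ⟨Finset.mem_univ _, hx⟩
    have hanotC : a ∉ C := by
      intro h
      have : a ∈ (Finset.univ : Finset I) \ C := by rw [habs]; simp
      exact (Finset.mem_sdiff.1 this).2 h
    have hbnotC : b ∉ C := by
      intro h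
      have : b ∈ (Finset.univ : Finset I) \ C := by rw [habs]; simp
      exact (Finset.mem_sdiff.1 this).2 h
    have hac : a ≠ c := fun h => hanotC (h ▸ hcC)
    have hbc : b ≠ c := fun h => hbnotC (h ▸ hcC)
    have hgc : g c = c := by
      have := hgC c hcC; rw [hc] at this; exact Finset.mem_singleton.1 this
    have hψc : ψ P c = c := (hψC c hcC).trans hgc
    have hψam : ψ P a ∈ ({a, b} : Finset I) := hmemab _ (hψnotC a hanotC)
    have hψbm : ψ P b ∈ ({a, b} : Finset I) := hmemab _ (hψnotC b hbnotC)
    have hTa : TTC P a = TTCaux (fun y S => favIn (P y) S y) {a, b} a := by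
      show TTCaux (fun y S => favIn (P y) S y) Finset.univ a = _
      rw [my_TTCaux_of_notMem hCne hanotC, ← hCdef, habs]
    have hTb : TTC P b = TTCaux (fun y S => favIn (P y) S y) {a, b} b := by
      show TTCaux (fun y S => favIn (P y) S y) Finset.univ b = _
      rw [my_TTCaux_of_notMem hCne hbnotC, ← hCdef, habs]
    have hpc : ({b, a} : Finset I) = {a, b} := Finset.pair_comm b a
    have hψupdD : ∀ (x : I) (q : LinearOrder I), q ∈ D → ∀ y, Function.update P x q y ∈ D := by
      intro x q hq y
      by_cases hy : y = x
      · rw [hy, Function.update_self]; exact hq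
      · rw [Function.update_of_ne hy]; exact hP y
    -- a small helper : LU forces an agent whose reported top is his own object to keep it
    have hkeep : ∀ (Q : I → LinearOrder I), (∀ x, Q x ∈ D) → ∀ x, topOf (Q x) x = x →
        ψ Q x = x := by
      intro Q hQ x hx
      exact hLU Q hQ {x} ⟨x, Finset.mem_singleton_self x⟩ id (Set.bijOn_id _)
        (by intro y hy; rw [Finset.mem_singleton.1 hy]; exact hx.symm)
        x (Finset.mem_singleton_self x)
    rcases my_favIn_pair_mem (P a) a b a with hma | hma
    · -- a points to himself in round 2 : identity on {a, b}
      have hTav : TTC P a = a := by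
        rw [hTa]; exact my_TTCaux_self (by simp) hma
      have hTbv : TTC P b = b := by
        rcases my_favIn_pair_mem (P b) a b b with hmb | hmb
        · rw [hTb, ← hpc]
          exact my_TTCaux_pair_other (Ne.symm hab) (by rw [hpc]; exact hmb)
            (by rw [hpc]; exact hma) (my_favIn_singleton (P b) b b)
        · rw [hTb]; exact my_TTCaux_self (by simp) hmb
      have hψav : ψ P a = a := by
        by_contra hcon
        have hψab : ψ P a = b := by
          rcases Finset.mem_insert.1 hψam with h | h
          · exact absurd h hcon
          · exact Finset.mem_singleton.1 h
        obtain ⟨q, hqD, hqtop⟩ := hD a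
        have h1 : ψ (Function.update P a q) a = a := by
          apply hkeep _ (hψupdD a q hqD)
          rw [Function.update_self]; exact hqtop
        apply hSP P hP a q hqD
        rw [hψab, h1]
        exact my_favIn_pair_eq_left (P a) hab a hma
      have hψbv : ψ P b = b := by
        rcases Finset.mem_insert.1 hψbm with h | h
        · exact absurd ((hψ P hP).1 (h.trans hψav.symm)) (Ne.symm hab)
        · exact Finset.mem_singleton.1 h
      funext x
      by_cases hx : x ∈ C
      · rw [hψC x hx, hTTCC x hx]
      · rcases Finset.mem_insert.1 (hmemab x hx) with rfl | hxb
        · rw [hψav, hTav]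
        · rw [Finset.mem_singleton.1 hxb, hψbv, hTbv]
    · rcases my_favIn_pair_mem (P b) a b b with hmb | hmb
      · -- swap case
        have hTav : TTC P a = b := by
          rw [hTa]; exact my_TTCaux_two (by simp) (by simp) hab hma hmb
        have hTbv : TTC P b = a := by
          rw [hTb]; exact my_TTCaux_two (by simp) (by simp) (Ne.symm hab) hmb hma
        have hψav : ψ P a = b := by
          by_contra hcon
          have hψaa : ψ P a = a := by
            rcases Finset.mem_insert.1 hψam with h | h
            · exact h
            · exact absurd (Finset.mem_singleton.1 h) hcon
          obtain ⟨qa, hqaD, hqatop⟩ := hD b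
          obtain ⟨qb, hqbD, hqbtop⟩ := hD a
          set P1 := Function.update P a qa with hP1def
          have hP1D : ∀ x, P1 x ∈ D := hψupdD a qa hqaD
          have hψ1c : ψ P1 c = c := by
            apply hkeep _ hP1D
            rw [hP1def, Function.update_of_ne (Ne.symm hac)]
            exact (rfl : topOf (P c) c = g c).trans hgc
          have hψ1notC : ∀ x, x ≠ c → ψ P1 x ∈ ({a, b} : Finset I) := by
            intro x hx
            apply hmemab
            rw [hc, Finset.mem_singleton]
            intro h
            exact hx ((hψ P1 hP1D).1 (h.trans hψ1c.symm))
          have hψ1a : ψ P1 a = a := by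
            rcases Finset.mem_insert.1 (hψ1notC a hac) with h | h
            · exact h
            · exfalso
              apply hSP P hP a qa hqaD
              rw [hψaa, ← hP1def, Finset.mem_singleton.1 h]
              exact my_favIn_pair_eq_right (P a) hab a hma
          have hψ1b : ψ P1 b = b := by
            rcases Finset.mem_insert.1 (hψ1notC b hbc) with h | h
            · exact absurd ((hψ P1 hP1D).1 (h.trans hψ1a.symm)) (Ne.symm hab)
            · exact Finset.mem_singleton.1 h
          set P2 := Function.update P1 b qb with hP2def
          have hP2D : ∀ x, P2 x ∈ D := by
            intro x
            by_cases hx : x = b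
            · rw [hP2def, hx, Function.update_self]; exact hqbD
            · rw [hP2def, Function.update_of_ne hx]; exact hP1D x
          have hψ2b : ψ P2 b = a := by
            have := hLU P2 hP2D {a, b} ⟨a, by simp⟩ (⇑(Equiv.swap a b)) my_swap_bijOn
              ?_ b (by simp)
            · rw [this, Equiv.swap_apply_right]
            · intro x hx
              rcases Finset.mem_insert.1 hx with rfl | hxb
              · rw [Equiv.swap_apply_left]
                rw [hP2def, Function.update_of_ne hab, hP1def, Function.update_self]
                exact ((my_topOf_default x b).trans hqatop).symm
              · rw [Finset.mem_singleton.1 hxb, Equiv.swap_apply_right]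
                rw [hP2def, Function.update_self]
                exact ((my_topOf_default b a).trans hqbtop).symm
          apply hSP P1 hP1D b qb hqbD
          rw [hψ1b, ← hP2def, hψ2b, hP1def, Function.update_of_ne (Ne.symm hab)]
          exact my_favIn_pair_eq_left (P b) hab b hmb
        have hψbv : ψ P b = a := by
          rcases Finset.mem_insert.1 hψbm with h | h
          · exact h
          · exact absurd ((hψ P hP).1 ((Finset.mem_singleton.1 h).trans hψav.symm))
              (Ne.symm hab)
        funext x
        by_cases hx : x ∈ C
        · rw [hψC x hx, hTTCC x hx]
        · rcases Finset.mem_insert.1 (hmemab x hx) with rfl | hxb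
          · rw [hψav, hTav]
          · rw [Finset.mem_singleton.1 hxb, hψbv, hTbv]
      · -- a points to b, b points to himself : identity
        have hTav : TTC P a = a := by
          rw [hTa]
          exact my_TTCaux_pair_other hab hma hmb (my_favIn_singleton (P a) a a)
        have hTbv : TTC P b = b := by
          rw [hTb]; exact my_TTCaux_self (by simp) hmb
        have hψbv : ψ P b = b := by
          by_contra hcon
          have hψba : ψ P b = a := by
            rcases Finset.mem_insert.1 hψbm with h | h
            · exact h
            · exact absurd (Finset.mem_singleton.1 h) hcon
          obtain ⟨q, hqD, hqtop⟩ := hD b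
          have h1 : ψ (Function.update P b q) b = b := by
            apply hkeep _ (hψupdD b q hqD)
            rw [Function.update_self]; exact hqtop
          apply hSP P hP b q hqD
          rw [hψba, h1]
          exact my_favIn_pair_eq_right (P b) hab b hmb
        have hψav : ψ P a = a := by
          rcases Finset.mem_insert.1 hψam with h | h
          · exact h
          · exact absurd ((hψ P hP).1 ((Finset.mem_singleton.1 h).trans hψbv.symm)) hab
        funext x
        by_cases hx : x ∈ C
        · rw [hψC x hx, hTTCC x hx]
        · rcases Finset.mem_insert.1 (hmemab x hx) with rfl | hxb
          · rw [hψav, hTav]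
          · rw [Finset.mem_singleton.1 hxb, hψbv, hTbv]

end FT5


/-- When there are exactly three agents, on any preference
domain satisfying Top-one Richness, a mechanism is locally unanimous and
strategy-proof if and only if it equals the TTC mechanism. -/
theorem stmt_3 {I : Type*} [DecidableEq I] [Fintype I] (hn : Fintype.card I = 3)
    (D : Set (LinearOrder I)) (hD : TopOneRich D)
    (ψ : (I → LinearOrder I) → I → I)
    (hψ : ∀ P : I → LinearOrder I, (∀ i, P i ∈ D) → Function.Bijective (ψ P)) :
    (LocallyUnanimous D ψ ∧ StrategyProof D ψ) ↔
      ∀ P : I → LinearOrder I, (∀ i, P i ∈ D) → ψ P = TTC P := by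
  constructor
  · rintro ⟨hLU, hSP⟩ P hP
    exact my_forward hn D hD ψ hψ hLU hSP P hP
  · intro hTTC
    constructor
    · intro P hPD J hJ μ hbij hμ i hi
      rw [hTTC P hPD]
      exact my_TTC_on_topcycle P hbij hμ i hi
    · intro P hPD i q hqD
      have hup : ∀ x, Function.update P i q x ∈ D := by
        intro x
        by_cases hx : x = i
        · rw [hx, Function.update_self]; exact hqD
        · rw [Function.update_of_ne hx]; exact hPD x
      rw [hTTC P hPD, hTTC _ hup]
      obtain ⟨T, hiT, hT⟩ := my_OS hn P i
      have h1 : TTC P i = favIn (P i) T i := by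
        have h2 := hT (P i)
        rwa [Function.update_eq_self] at h2
      rw [h1, hT q]
      exact my_not_lt (P i) (my_le_favIn (P i) (my_favIn_mem q ⟨i, hiT⟩ i) i)
end

section
/- On any preference domain 𝒟, the TTC mechanism is group strategy-proof (and hence strategy-proof): for every profile ≻ ∈ 𝒟^n, there is no nonempty set J ⊆ I and joint misreport ≻'_J ∈ 𝒟^{|J|} such that TTC_i(≻'_J, ≻_{I∖J}) ⪰_i TTC_i(≻) for all i ∈ J with strict preference for some j ∈ J. -/
/- Housing market model (Shapley–Scarf). Agents and objects are identified:
the type `I` is the (finite) set of agents, and object `i` (the endowment of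
agent `i`) is identified with `i` itself. A strict preference is a linear
order on `I` (viewed as the set of objects); a preference domain is a set of
linear orders; a mechanism maps preference profiles to assignments `I → I`
(an allocation being a bijective assignment). -/

open Finset

variable {I : Type*} [DecidableEq I]

section AuxTTC
variable {I : Type*} [DecidableEq I]

/-! ### basic `favIn` lemmas -/

lemma favIn_mem (p : LinearOrder I) {S : Finset I} {x : I} (h : x ∈ S) (d : I) :
    favIn p S d ∈ S := by
  unfold favIn
  rw [dif_pos ⟨x, h⟩]
  exact @Finset.max'_mem I p S ⟨x, h⟩

lemma le_favIn (p : LinearOrder I) {S : Finset I} {x : I} (h : x ∈ S) (d : I) :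
    p.le x (favIn p S d) := by
  unfold favIn
  rw [dif_pos ⟨x, h⟩]
  exact @Finset.le_max' I p S x h

/-! ### `cyclicAgents` lemmas -/

lemma mem_cyclicAgents {fav : I → Finset I → I} {S : Finset I} {i : I} :
    i ∈ cyclicAgents fav S ↔
      i ∈ S ∧ ∃ k ∈ Finset.range S.card, (fun j => fav j S)^[k + 1] i = i := by
  unfold cyclicAgents
  exact Finset.mem_filter

lemma iterate_mem {fav : I → Finset I → I} {S : Finset I}
    (hcl : ∀ x ∈ S, fav x S ∈ S) {x : I} (hx : x ∈ S) :
    ∀ m, (fun j => fav j S)^[m] x ∈ S := by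
  intro m
  induction m with
  | zero => exact hx
  | succ m ih =>
    rw [Function.iterate_succ_apply']
    exact hcl _ ih

lemma cyclicAgents_nonempty {fav : I → Finset I → I} {S : Finset I}
    (hcl : ∀ x ∈ S, fav x S ∈ S) (hS : S.Nonempty) :
    (cyclicAgents fav S).Nonempty := by
  obtain ⟨i₀, hi₀⟩ := hS
  have hmap : ∀ a ∈ Finset.range (S.card + 1), (fun j => fav j S)^[a] i₀ ∈ S :=
    fun a _ => iterate_mem hcl hi₀ a
  have hcard : S.card < (Finset.range (S.card + 1)).card := by
    rw [Finset.card_range]; omega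
  obtain ⟨a, ha, b, hb, hab, heq⟩ :=
    Finset.exists_ne_map_eq_of_card_lt_of_maps_to hcard hmap
  rw [Finset.mem_range] at ha hb
  -- wlog a < b
  have main : ∀ a b : ℕ, a < b → b < S.card + 1 →
      (fun j => fav j S)^[a] i₀ = (fun j => fav j S)^[b] i₀ →
      (cyclicAgents fav S).Nonempty := by
    intro a b hlt hbb heq
    refine ⟨(fun j => fav j S)^[a] i₀, mem_cyclicAgents.mpr ⟨iterate_mem hcl hi₀ a, b - a - 1,
      Finset.mem_range.mpr (by omega), ?_⟩⟩
    have h1 : (b - a - 1) + 1 = b - a := by omega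
    rw [h1, ← Function.iterate_add_apply]
    have h2 : b - a + a = b := by omega
    rw [h2, ← heq]
  rcases hab.lt_or_gt with h | h
  · exact main a b h hb heq
  · exact main b a h ha heq.symm

lemma next_mem_cyclicAgents {fav : I → Finset I → I} {S : Finset I}
    (hcl : ∀ x ∈ S, fav x S ∈ S) {x : I} (hx : x ∈ cyclicAgents fav S) :
    fav x S ∈ cyclicAgents fav S := by
  obtain ⟨hxS, k, hk, hper⟩ := mem_cyclicAgents.mp hx
  refine mem_cyclicAgents.mpr ⟨hcl _ hxS, k, hk, ?_⟩
  show (fun j => fav j S)^[k + 1] ((fun j => fav j S) x) = (fun j => fav j S) x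
  have e1 : (fun j => fav j S)^[k + 1] ((fun j => fav j S) x)
      = (fun j => fav j S)^[k + 1 + 1] x :=
    (Function.iterate_succ_apply (fun j => fav j S) (k + 1) x).symm
  have e2 : (fun j => fav j S)^[k + 1 + 1] x
      = (fun j => fav j S) ((fun j => fav j S)^[k + 1] x) :=
    Function.iterate_succ_apply' (fun j => fav j S) (k + 1) x
  exact e1.trans (e2.trans (by rw [hper]))

lemma iterate_mem_cyclicAgents {fav : I → Finset I → I} {S : Finset I}
    (hcl : ∀ x ∈ S, fav x S ∈ S) {x : I} (hx : x ∈ cyclicAgents fav S) :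
    ∀ m, (fun j => fav j S)^[m] x ∈ cyclicAgents fav S := by
  intro m
  induction m with
  | zero => exact hx
  | succ m ih =>
    rw [Function.iterate_succ_apply']
    exact next_mem_cyclicAgents hcl ih

lemma cyclic_inj {fav : I → Finset I → I} {S : Finset I} {x y : I}
    (hx : x ∈ cyclicAgents fav S) (hy : y ∈ cyclicAgents fav S)
    (h : fav x S = fav y S) : x = y := by
  obtain ⟨hxS, kx, _, hpx⟩ := mem_cyclicAgents.mp hx
  obtain ⟨hyS, ky, _, hpy⟩ := mem_cyclicAgents.mp hy
  set g := fun j => fav j S with hg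
  have hNx : g^[(kx + 1) * (ky + 1)] x = x := by
    rw [Function.iterate_mul]
    exact Function.iterate_fixed hpx (ky + 1)
  have hNy : g^[(kx + 1) * (ky + 1)] y = y := by
    rw [mul_comm, Function.iterate_mul]
    exact Function.iterate_fixed hpy (kx + 1)
  have hp0 : 0 < (kx + 1) * (ky + 1) := Nat.mul_pos (Nat.succ_pos _) (Nat.succ_pos _)
  obtain ⟨N, hN⟩ : ∃ N, (kx + 1) * (ky + 1) = N + 1 := ⟨(kx + 1) * (ky + 1) - 1, by omega⟩
  rw [hN] at hNx hNy
  calc x = g^[N + 1] x := hNx.symm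
    _ = g^[N] (g x) := Function.iterate_succ_apply g N x
    _ = g^[N] (g y) := by show _ = g^[N] (fav y S); rw [← h]
    _ = g^[N + 1] y := (Function.iterate_succ_apply g N y).symm
    _ = y := hNy

lemma image_cyclicAgents {fav : I → Finset I → I} {S : Finset I}
    (hcl : ∀ x ∈ S, fav x S ∈ S) :
    (cyclicAgents fav S).image (fun j => fav j S) = cyclicAgents fav S := by
  apply Finset.Subset.antisymm
  · intro y hy
    obtain ⟨x, hx, rfl⟩ := Finset.mem_image.mp hy
    exact next_mem_cyclicAgents hcl hx
  · intro y hy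
    obtain ⟨hyS, k, hk, hper⟩ := mem_cyclicAgents.mp hy
    refine Finset.mem_image.mpr ⟨(fun j => fav j S)^[k] y, iterate_mem_cyclicAgents hcl hy k, ?_⟩
    show (fun j => fav j S) ((fun j => fav j S)^[k] y) = y
    rw [Function.iterate_succ_apply'] at hper
    exact hper

/-! ### `TTCaux` lemmas -/

lemma TTCaux_cyc {fav : I → Finset I → I} {S : Finset I} {i : I}
    (hi : i ∈ cyclicAgents fav S) : TTCaux fav S i = fav i S := by
  rw [TTCaux, dif_pos ⟨i, hi⟩, if_pos hi]

lemma TTCaux_not_cyc {fav : I → Finset I → I} {S : Finset I} {i : I}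
    (hC : (cyclicAgents fav S).Nonempty) (hi : i ∉ cyclicAgents fav S) :
    TTCaux fav S i = TTCaux fav (S \ cyclicAgents fav S) i := by
  conv_lhs => rw [TTCaux]
  rw [dif_pos hC, if_neg hi]

lemma TTCaux_no_cyc {fav : I → Finset I → I} {S : Finset I} {i : I}
    (hC : ¬ (cyclicAgents fav S).Nonempty) : TTCaux fav S i = i := by
  conv_lhs => rw [TTCaux]
  rw [dif_neg hC]
  rfl

lemma TTCaux_notMem_aux {fav : I → Finset I → I} :
    ∀ n (S : Finset I), S.card ≤ n → ∀ i ∉ S, TTCaux fav S i = i := by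
  intro n
  induction n with
  | zero =>
    intro S hS i hi
    have : S = ∅ := Finset.card_eq_zero.mp (Nat.le_zero.mp hS)
    subst this
    apply TTCaux_no_cyc
    intro ⟨x, hx⟩
    exact absurd (cyclicAgents_subset fav ∅ hx) (Finset.notMem_empty x)
  | succ n IH =>
    intro S hS i hi
    by_cases hC : (cyclicAgents fav S).Nonempty
    · have hi' : i ∉ cyclicAgents fav S := fun h => hi (cyclicAgents_subset fav S h)
      rw [TTCaux_not_cyc hC hi']
      apply IH
      · have := Finset.card_lt_card (Finset.sdiff_ssubset (cyclicAgents_subset fav S) hC)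
        omega
      · intro h
        exact hi (Finset.mem_sdiff.mp h).1
    · exact TTCaux_no_cyc hC

lemma TTCaux_notMem {fav : I → Finset I → I} {S : Finset I} {i : I} (hi : i ∉ S) :
    TTCaux fav S i = i :=
  TTCaux_notMem_aux S.card S le_rfl i hi

lemma TTCaux_mem_aux {fav : I → Finset I → I}
    (hcl : ∀ T : Finset I, ∀ x ∈ T, fav x T ∈ T) :
    ∀ n (S : Finset I), S.card ≤ n → ∀ i ∈ S, TTCaux fav S i ∈ S := by
  intro n
  induction n with
  | zero =>
    intro S hS i hi
    rw [Finset.card_eq_zero.mp (Nat.le_zero.mp hS)] at hi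
    exact absurd hi (Finset.notMem_empty i)
  | succ n IH =>
    intro S hS i hi
    by_cases hiC : i ∈ cyclicAgents fav S
    · rw [TTCaux_cyc hiC]; exact hcl S i hi
    · by_cases hC : (cyclicAgents fav S).Nonempty
      · rw [TTCaux_not_cyc hC hiC]
        have hcard : (S \ cyclicAgents fav S).card ≤ n := by
          have := Finset.card_lt_card (Finset.sdiff_ssubset (cyclicAgents_subset fav S) hC)
          omega
        exact Finset.mem_sdiff.mp
          (IH _ hcard i (Finset.mem_sdiff.mpr ⟨hi, hiC⟩)) |>.1
      · rw [TTCaux_no_cyc hC]; exact hi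

lemma TTCaux_mem {fav : I → Finset I → I}
    (hcl : ∀ T : Finset I, ∀ x ∈ T, fav x T ∈ T) {S : Finset I} {i : I} (hi : i ∈ S) :
    TTCaux fav S i ∈ S :=
  TTCaux_mem_aux hcl S.card S le_rfl i hi

lemma TTCaux_inj_aux {fav : I → Finset I → I}
    (hcl : ∀ T : Finset I, ∀ x ∈ T, fav x T ∈ T) :
    ∀ n (S : Finset I), S.card ≤ n → ∀ x y, TTCaux fav S x = TTCaux fav S y → x = y := by
  intro n
  induction n with
  | zero =>
    intro S hS x y h
    have hE : S = ∅ := Finset.card_eq_zero.mp (Nat.le_zero.mp hS)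
    have hC : ¬ (cyclicAgents fav S).Nonempty := by
      subst hE
      intro ⟨z, hz⟩
      exact absurd (cyclicAgents_subset fav ∅ hz) (Finset.notMem_empty z)
    rwa [TTCaux_no_cyc hC, TTCaux_no_cyc hC] at h
  | succ n IH =>
    intro S hS x y h
    by_cases hC : (cyclicAgents fav S).Nonempty
    · have hcard : (S \ cyclicAgents fav S).card ≤ n := by
        have := Finset.card_lt_card (Finset.sdiff_ssubset (cyclicAgents_subset fav S) hC)
        omega
      -- value of a non-cyclic agent is outside the cyclic set
      have hval : ∀ z, z ∉ cyclicAgents fav S → TTCaux fav S z ∉ cyclicAgents fav S := by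
        intro z hz
        rw [TTCaux_not_cyc hC hz]
        by_cases hzS : z ∈ S
        · have : TTCaux fav (S \ cyclicAgents fav S) z ∈ S \ cyclicAgents fav S :=
            TTCaux_mem hcl (Finset.mem_sdiff.mpr ⟨hzS, hz⟩)
          exact (Finset.mem_sdiff.mp this).2
        · rw [TTCaux_notMem (fun hh => hzS (Finset.mem_sdiff.mp hh).1)]
          intro hzc
          exact hzS (cyclicAgents_subset fav S hzc)
      by_cases hx : x ∈ cyclicAgents fav S <;> by_cases hy : y ∈ cyclicAgents fav S
      · rw [TTCaux_cyc hx, TTCaux_cyc hy] at h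
        exact cyclic_inj hx hy h
      · exfalso
        rw [TTCaux_cyc hx] at h
        exact hval y hy (h ▸ next_mem_cyclicAgents (hcl S) hx)
      · exfalso
        rw [TTCaux_cyc hy] at h
        exact hval x hx (h.symm ▸ next_mem_cyclicAgents (hcl S) hy)
      · rw [TTCaux_not_cyc hC hx, TTCaux_not_cyc hC hy] at h
        exact IH _ hcard x y h
    · rwa [TTCaux_no_cyc hC, TTCaux_no_cyc hC] at h

lemma TTCaux_inj {fav : I → Finset I → I}
    (hcl : ∀ T : Finset I, ∀ x ∈ T, fav x T ∈ T) {S : Finset I} :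
    Function.Injective (TTCaux fav S) :=
  fun x y h => TTCaux_inj_aux hcl S.card S le_rfl x y h

/-! ### stages of the TTC procedure -/

variable [Fintype I]

def stageF (fav : I → Finset I → I) : ℕ → Finset I
  | 0 => Finset.univ
  | k + 1 => stageF fav k \ cyclicAgents fav (stageF fav k)

lemma stage_succ_subset {fav : I → Finset I → I} {k : ℕ} :
    stageF fav (k + 1) ⊆ stageF fav k := Finset.sdiff_subset

lemma stage_anti {fav : I → Finset I → I} {m k : ℕ} (h : m ≤ k) :
    stageF fav k ⊆ stageF fav m := by
  induction k with
  | zero => rw [Nat.le_zero.mp h]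
  | succ k IH =>
    rcases Nat.lt_or_ge m (k + 1) with h' | h'
    · exact fun x hx => IH (by omega) (stage_succ_subset hx)
    · rw [le_antisymm h h']

lemma stage_empty {fav : I → Finset I → I}
    (hcl : ∀ T : Finset I, ∀ x ∈ T, fav x T ∈ T) :
    stageF (I := I) fav (Fintype.card I + 1) = ∅ := by
  have h : ∀ k, stageF (I := I) fav k = ∅ ∨ (stageF (I := I) fav k).card + k ≤ Fintype.card I := by
    intro k
    induction k with
    | zero => right; simp [stageF]
    | succ k IH =>
      rcases IH with hE | hle
      · left; show stageF fav k \ _ = ∅; rw [hE]; exact Finset.empty_sdiff _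
      · rcases Finset.eq_empty_or_nonempty (stageF (I := I) fav k) with hE | hne
        · left; show stageF fav k \ _ = ∅; rw [hE]; exact Finset.empty_sdiff _
        · right
          have hC : (cyclicAgents fav (stageF (I := I) fav k)).Nonempty :=
            cyclicAgents_nonempty (hcl _) hne
          have : (stageF (I := I) fav (k + 1)).card < (stageF (I := I) fav k).card :=
            Finset.card_lt_card (Finset.sdiff_ssubset (cyclicAgents_subset _ _) hC)
          omega
    
  rcases h (Fintype.card I + 1) with hE | hle
  · exact hE
  · exfalso; omega

/-! ### specialization to preference profiles -/

def favP (P : I → LinearOrder I) : I → Finset I → I := fun i S => favIn (P i) S i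

lemma favP_cl (P : I → LinearOrder I) : ∀ T : Finset I, ∀ x ∈ T, favP P x T ∈ T :=
  fun _ x h => favIn_mem _ h x

lemma exists_rnd (P : I → LinearOrder I) (x : I) :
    ∃ t, x ∉ stageF (favP P) (t + 1) :=
  ⟨Fintype.card I, by rw [stage_empty (favP_cl P)]; exact Finset.notMem_empty x⟩

def rnd (P : I → LinearOrder I) (x : I) : ℕ := Nat.find (exists_rnd P x)

lemma mem_stage_iff {P : I → LinearOrder I} {x : I} {k : ℕ} :
    x ∈ stageF (favP P) k ↔ k ≤ rnd P x := by
  constructor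
  · intro h
    by_contra hk
    have h1 : rnd P x + 1 ≤ k := by omega
    exact Nat.find_spec (exists_rnd P x) (stage_anti h1 h)
  · intro h
    match k, h with
    | 0, _ => exact Finset.mem_univ x
    | t + 1, h =>
      by_contra hx
      have h2 : rnd P x ≤ t := Nat.find_le hx
      omega

lemma mem_cyclic_rnd (P : I → LinearOrder I) (x : I) :
    x ∈ cyclicAgents (favP P) (stageF (favP P) (rnd P x)) := by
  have h1 : x ∈ stageF (favP P) (rnd P x) := mem_stage_iff.mpr le_rfl
  have h2 : x ∉ stageF (favP P) (rnd P x + 1) := Nat.find_spec (exists_rnd P x)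
  by_contra hx
  exact h2 (Finset.mem_sdiff.mpr ⟨h1, hx⟩)

lemma rnd_eq_of_cyclic {P : I → LinearOrder I} {x : I} {r : ℕ}
    (h : x ∈ cyclicAgents (favP P) (stageF (favP P) r)) : rnd P x = r := by
  have h1 : r ≤ rnd P x := mem_stage_iff.mp (cyclicAgents_subset _ _ h)
  have h2 : rnd P x ≤ r := by
    apply Nat.find_le
    show x ∉ stageF (favP P) r \ _
    intro hx
    exact (Finset.mem_sdiff.mp hx).2 h
  omega

lemma TTC_stage {P : I → LinearOrder I} {x : I} {t : ℕ}
    (h : x ∈ stageF (favP P) t) :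
    TTC P x = TTCaux (favP P) (stageF (favP P) t) x := by
  induction t with
  | zero => rfl
  | succ t IH =>
    have hx : x ∈ stageF (favP P) t := stage_succ_subset h
    have hxC : x ∉ cyclicAgents (favP P) (stageF (favP P) t) :=
      fun hc => (Finset.mem_sdiff.mp h).2 hc
    have hC : (cyclicAgents (favP P) (stageF (favP P) t)).Nonempty :=
      cyclicAgents_nonempty (favP_cl P _) ⟨x, hx⟩
    rw [IH hx, TTCaux_not_cyc hC hxC]
    rfl

lemma TTC_eq_fav (P : I → LinearOrder I) (x : I) :
    TTC P x = favP P x (stageF (favP P) (rnd P x)) := by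
  rw [TTC_stage (mem_stage_iff.mpr le_rfl), TTCaux_cyc (mem_cyclic_rnd P x)]

lemma TTC_injective (P : I → LinearOrder I) : Function.Injective (TTC P) :=
  TTCaux_inj (favP_cl P)

lemma image_compl_stage (P : I → LinearOrder I) (t : ℕ) :
    (Finset.univ \ stageF (favP P) t).image (TTC P) = Finset.univ \ stageF (favP P) t := by
  induction t with
  | zero => simp [stageF]
  | succ t IH =>
    have hsub := cyclicAgents_subset (favP P) (stageF (favP P) t)
    have hsplit : Finset.univ \ stageF (favP P) (t + 1) =
        (Finset.univ \ stageF (favP P) t) ∪ cyclicAgents (favP P) (stageF (favP P) t) := by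
      ext x
      simp only [Finset.mem_sdiff, Finset.mem_univ, true_and, Finset.mem_union, stageF]
      constructor
      · intro hx
        by_cases h1 : x ∈ stageF (favP P) t
        · right
          by_contra h2
          exact hx ⟨h1, h2⟩
        · exact Or.inl h1
      · intro hx hmem
        rcases hx with h1 | h1
        · exact h1 hmem.1
        · exact hmem.2 h1
    have himC : (cyclicAgents (favP P) (stageF (favP P) t)).image (TTC P) =
        cyclicAgents (favP P) (stageF (favP P) t) := by
      rw [Finset.image_congr (g := fun j => favP P j (stageF (favP P) t))
        (fun x hx => by
          rw [TTC_stage (hsub hx), TTCaux_cyc hx])]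
      exact image_cyclicAgents (favP_cl P _)
    rw [hsplit, Finset.image_union, IH, himC]

/-! ### the key invariance lemma -/

lemma TTC_key (P P' : I → LinearOrder I) (J : Finset I)
    (hout : ∀ i ∉ J, P' i = P i)
    (himp : ∀ i ∈ J, (P i).le (TTC P i) (TTC P' i)) :
    ∀ i, TTC P' i = TTC P i := by
  have main : ∀ t, ∀ i, rnd P i = t → TTC P' i = TTC P i := by
    intro t
    induction t using Nat.strong_induction_on with
    | _ t IH =>
    intro i hit
    set S := stageF (favP P) t with hSdef
    have hIH : ∀ j, j ∉ S → TTC P' j = TTC P j := by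
      intro j hj
      have : rnd P j < t := by
        by_contra hc
        exact hj (mem_stage_iff.mpr (by omega))
      exact IH _ this j rfl
    -- Step 1: agents of S receive objects of S under P'
    have himg : (Finset.univ \ S).image (TTC P') = Finset.univ \ S := by
      rw [Finset.image_congr (g := TTC P)
        (fun x hx => hIH x (Finset.mem_sdiff.mp hx).2)]
      exact image_compl_stage P t
    have hS1 : ∀ j ∈ S, TTC P' j ∈ S := by
      intro j hj
      by_contra hjn
      have h1 : TTC P' j ∈ (Finset.univ \ S).image (TTC P') := by
        rw [himg]
        exact Finset.mem_sdiff.mpr ⟨Finset.mem_univ _, hjn⟩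
      obtain ⟨j', hj', hjeq⟩ := Finset.mem_image.mp h1
      rw [TTC_injective P' hjeq] at hj'
      exact (Finset.mem_sdiff.mp hj').2 hj
    -- the cycle of i at round t under P
    set g := fun j => favP P j S with hgdef
    have hiC : i ∈ cyclicAgents (favP P) S := by
      rw [hSdef, ← hit]
      exact mem_cyclic_rnd P i
    -- one step along the cycle
    have step : ∀ y, y ∈ cyclicAgents (favP P) S → ∀ r', rnd P' y = r' →
        g y ∈ stageF (favP P') r' → TTC P' y = g y ∧ rnd P' (g y) = r' := by
      intro y hyC r' hyr hgy
      have hyS : y ∈ S := cyclicAgents_subset _ _ hyC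
      have h1 : TTC P' y ∈ S := hS1 y hyS
      have hrndPy : rnd P y = t := by rw [rnd_eq_of_cyclic (hSdef ▸ hyC)]
      have hTTCy : TTC P y = g y := by
        rw [TTC_eq_fav, hrndPy, ← hSdef]
      have hTTC'y : TTC P' y = favP P' y (stageF (favP P') r') := by
        rw [TTC_eq_fav, hyr]
      have key1 : TTC P' y = g y := by
        by_cases hyJ : y ∈ J
        · have h2 := himp y hyJ
          rw [hTTCy] at h2
          have h3 : (P y).le (TTC P' y) (g y) := le_favIn (P y) h1 y
          letI := P y
          exact le_antisymm h3 h2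
        · have hPy : P' y = P y := hout y hyJ
          have h2 : (P y).le (g y) (TTC P' y) := by
            rw [hTTC'y]
            show (P y).le (g y) (favIn (P' y) (stageF (favP P') r') y)
            rw [hPy]
            exact le_favIn (P y) hgy y
          have h3 : (P y).le (TTC P' y) (g y) := le_favIn (P y) h1 y
          letI := P y
          exact le_antisymm h3 h2
      refine ⟨key1, ?_⟩
      have hyC' : y ∈ cyclicAgents (favP P') (stageF (favP P') r') := by
        rw [← hyr]; exact mem_cyclic_rnd P' y
      have hnext : favP P' y (stageF (favP P') r') ∈
          cyclicAgents (favP P') (stageF (favP P') r') :=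
        next_mem_cyclicAgents (favP_cl P' _) hyC'
      rw [← hTTC'y, key1] at hnext
      exact rnd_eq_of_cyclic hnext
    -- set up the orbit and minimality
    obtain ⟨hiS, k, hk, hper⟩ := mem_cyclicAgents.mp hiC
    set p := k + 1 with hpdef
    have hp : 0 < p := Nat.succ_pos k
    have hperiod : g^[p] i = i := hper
    have hfix : ∀ q, g^[p * q] i = i := by
      intro q
      rw [Function.iterate_mul]
      exact Function.iterate_fixed hperiod q
    have hmod : ∀ m, g^[m] i = g^[m % p] i := by
      intro m
      conv_lhs => rw [← Nat.mod_add_div m p]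
      rw [Function.iterate_add_apply, hfix]
    obtain ⟨m₀, hm₀, hmin⟩ := Finset.exists_min_image (Finset.range p)
      (fun m => rnd P' (g^[m] i)) ⟨0, Finset.mem_range.mpr hp⟩
    set r := rnd P' (g^[m₀] i) with hrdef
    have hmin' : ∀ m, r ≤ rnd P' (g^[m] i) := by
      intro m
      rw [hmod m]
      exact hmin _ (Finset.mem_range.mpr (Nat.mod_lt _ hp))
    have horbC : ∀ m, g^[m] i ∈ cyclicAgents (favP P) S :=
      fun m => iterate_mem_cyclicAgents (favP_cl P S) hiC m
    have claimC : ∀ s, rnd P' (g^[s + m₀] i) = r := by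
      intro s
      induction s with
      | zero => rw [Nat.zero_add]
      | succ s ihs =>
        have hgy : g (g^[s + m₀] i) ∈ stageF (favP P') r := by
          rw [← Function.iterate_succ_apply' g (s + m₀) i]
          exact mem_stage_iff.mpr (hmin' (s + m₀ + 1))
        have := (step (g^[s + m₀] i) (horbC _) r ihs hgy).2
        rw [show s + 1 + m₀ = (s + m₀) + 1 by omega, Function.iterate_succ_apply']
        exact this
    have hm₀p : m₀ < p := Finset.mem_range.mp hm₀
    have hi_r : rnd P' i = r := by
      have h1 := claimC (p - m₀)
      rw [show p - m₀ + m₀ = p by omega, hperiod] at h1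
      exact h1
    have hgi : g i ∈ stageF (favP P') r := by
      have := hmin' 1
      rw [Function.iterate_one] at this
      exact mem_stage_iff.mpr this
    have final := (step i hiC r hi_r hgi).1
    rw [final, TTC_eq_fav P i, hit, ← hSdef]
  intro i
  exact main (rnd P i) i rfl

end AuxTTC

/-- On any preference domain, the TTC mechanism is group
strategy-proof (and hence strategy-proof). -/
theorem stmt_6 {I : Type*} [DecidableEq I] [Fintype I] (hn : 3 ≤ Fintype.card I)
    (D : Set (LinearOrder I)) :
    GroupStrategyProof D (fun P => TTC P) ∧ StrategyProof D (fun P => TTC P) := by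
  have gsp : GroupStrategyProof D (fun P => TTC P) := by
    intro P P' _ _ J _ hout h
    obtain ⟨hweak, j, hjJ, hlt⟩ := h
    have hkey := TTC_key P P' J hout hweak j
    have hlt' : (P j).lt (TTC P j) (TTC P' j) := hlt
    rw [hkey] at hlt'
    letI := P j
    exact lt_irrefl _ hlt'
  refine ⟨gsp, ?_⟩
  intro P _ i q _ hlt
  have hout : ∀ j ∉ ({i} : Finset I), Function.update P i q j = P j := by
    intro j hj
    exact Function.update_of_ne (by simpa using hj) _ _
  have hweak : ∀ j ∈ ({i} : Finset I),
      (P j).le (TTC P j) (TTC (Function.update P i q) j) := by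
    intro j hj
    rcases Finset.mem_singleton.mp hj with rfl
    letI := P j
    exact le_of_lt hlt
  have hkey := TTC_key P (Function.update P i q) {i} hout hweak i
  have hlt' : (P i).lt (TTC P i) (TTC (Function.update P i q) i) := hlt
  rw [hkey] at hlt'
  letI := P i
  exact lt_irrefl _ hlt'
end
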